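/- arXiv:1809.02235 — 3 statements merged into one kernel-verified Lean document; each statement's English description precedes it below -/
import Mathlib

section
/- Fix α ∈ (0, e^{-1}) and an integer n ≥ 2. Let H0 ⊆ {1,…,n} be nonempty and let p_1,…,p_n be random variables with values in (0,1] such that the family {p_i}_{i∈H0} is mutually independent and each p_i with i ∈ H0 is sub-uniform. For k ∈ {0,1,…,n} set R_k = {i : p_i ≤ αk/n}, FDP(R_k) = |R_k ∩ H0| / max(|R_k|, 1), and FDP̂(R_k) = n·(max_{i∈R_k} p_i) / max(|R_k|, 1), where the maximum over the empty set is 0. Then E[ max over k ∈ {0,…,n} with FDP̂(R_k) ≤ α of FDP(R_k) ] ≤ 4α·log(9/α). -/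
/-!
If the maximal selected FDP exceeds `u > 0`, some `R_k` with `FDP̂(R_k) ≤ α` contains
`j = |R_k ∩ H0| > u |R_k|` nulls, each with p-value at most `max_{R_k} p ≤ α |R_k| / n < j α / (u n)`.
By independence and sub-uniformity, at least `j` null p-values fall below `j y` with probability
at most `C(|H0|, j) (j y)^j ≤ (e |H0| y)^j`, so summing a geometric series over `j` gives
`P(max FDP > u) ≤ eα / (u - eα)`. Bounding this tail by `1` below `α + eα` and integrating it
above gives `E[max FDP] ≤ α + eα + eα log(1/α) ≤ 4α log(9/α)`.
-/

open MeasureTheory ProbabilityTheory Finset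

variable {Ω : Type*}

/-- The rejection set `R_k = {i : p_i ≤ α k / n}`. -/
noncomputable def Rset (n : ℕ) (α : ℝ) (p : Fin n → Ω → ℝ) (k : ℕ) (ω : Ω) : Finset (Fin n) :=
  Finset.univ.filter (fun i => p i ω ≤ α * k / n)

/-- The false discovery proportion `FDP(R_k) = |R_k ∩ H0| / max(|R_k|, 1)`. -/
noncomputable def FDP (n : ℕ) (α : ℝ) (H0 : Finset (Fin n)) (p : Fin n → Ω → ℝ) (k : ℕ)
    (ω : Ω) : ℝ :=
  ((Rset n α p k ω ∩ H0).card : ℝ) / max ((Rset n α p k ω).card : ℝ) 1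

/-- The empirical bound `FDP̂(R_k) = n · max_{i ∈ R_k} p_i / max(|R_k|, 1)`, with the maximum
over the empty set taken to be `0`. -/
noncomputable def FDPhat (n : ℕ) (α : ℝ) (p : Fin n → Ω → ℝ) (k : ℕ) (ω : Ω) : ℝ :=
  (n : ℝ) *
    (if h : (Rset n α p k ω).Nonempty then (Rset n α p k ω).sup' h (fun i => p i ω) else 0) /
    max ((Rset n α p k ω).card : ℝ) 1

open Real

section AtLeastLE

variable {ι : Type*} [Fintype ι]

noncomputable def atLeastLE (X : ι → Ω → ℝ) (j : ℕ) (x : ℝ) : Set Ω :=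
  {ω | j ≤ #{i | X i ω ≤ x}}

theorem atLeastLE_subset_biUnion (X : ι → Ω → ℝ) (j : ℕ) (x : ℝ) :
    atLeastLE X j x ⊆ ⋃ T ∈ (univ : Finset ι).powersetCard j, ⋂ i ∈ T, {ω | X i ω ≤ x} := by
  intro ω hω
  obtain ⟨T, hTS, hTcard⟩ := exists_subset_card_eq hω
  refine Set.mem_biUnion (mem_powersetCard.2 ⟨subset_univ T, hTcard⟩) ?_
  exact Set.mem_iInter₂.2 fun i hi => (mem_filter.1 (hTS hi)).2

theorem measureReal_atLeastLE_le [MeasurableSpace Ω] {μ : Measure Ω} [IsProbabilityMeasure μ]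
    {X : ι → Ω → ℝ} (hX : iIndepFun X μ)
    (hsub : ∀ i, ∀ x ∈ Set.Icc (0 : ℝ) 1, μ {ω | X i ω ≤ x} ≤ ENNReal.ofReal x)
    {x : ℝ} (hx : 0 ≤ x) (j : ℕ) :
    μ.real (atLeastLE X j x) ≤ (Fintype.card ι).choose j * x ^ j := by
  have hsub' : ∀ i, μ {ω | X i ω ≤ x} ≤ ENNReal.ofReal x := fun i => by
    rcases le_or_gt x 1 with hx1 | hx1
    · exact hsub i x ⟨hx, hx1⟩
    · exact prob_le_one.trans (ENNReal.one_le_ofReal.2 hx1.le)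
  calc μ.real (atLeastLE X j x)
      ≤ μ.real (⋃ T ∈ (univ : Finset ι).powersetCard j, ⋂ i ∈ T, {ω | X i ω ≤ x}) :=
        measureReal_mono (atLeastLE_subset_biUnion X j x) (measure_ne_top _ _)
    _ ≤ ∑ T ∈ (univ : Finset ι).powersetCard j, μ.real (⋂ i ∈ T, {ω | X i ω ≤ x}) :=
        measureReal_biUnion_finset_le _ _
    _ ≤ ∑ T ∈ (univ : Finset ι).powersetCard j, x ^ j := sum_le_sum fun T hT => ?_
    _ = (Fintype.card ι).choose j * x ^ j := by simp [card_powersetCard]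
  rw [Measure.real, hX.meas_biInter (s := fun i => {ω | X i ω ≤ x})
    fun i _ => ⟨Set.Iic x, measurableSet_Iic, rfl⟩, ← (mem_powersetCard.1 hT).2]
  refine ENNReal.toReal_le_of_le_ofReal (by positivity) ?_
  calc ∏ i ∈ T, μ {ω | X i ω ≤ x} ≤ ∏ _i ∈ T, ENNReal.ofReal x := prod_le_prod' fun i _ => hsub' i
    _ = ENNReal.ofReal (x ^ #T) := by rw [prod_const, ENNReal.ofReal_pow hx]

theorem choose_mul_mul_pow_le_exp_mul_pow (m j : ℕ) {y : ℝ} (hy : 0 ≤ y) :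
    (m.choose j : ℝ) * (j * y) ^ j ≤ (exp 1 * m * y) ^ j := by
  have hj : (j : ℝ) ^ j / j.factorial ≤ exp 1 ^ j := by
    rw [← exp_nat_mul, mul_one]
    exact pow_div_factorial_le_exp _ (Nat.cast_nonneg j) j
  calc (m.choose j : ℝ) * (j * y) ^ j ≤ (m ^ j / j.factorial) * (j * y) ^ j := by
        gcongr; exact Nat.choose_le_pow_div j m
    _ = (j ^ j / j.factorial) * (m * y) ^ j := by ring
    _ ≤ exp 1 ^ j * (m * y) ^ j := by gcongr
    _ = (exp 1 * m * y) ^ j := by ring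

theorem measureReal_atLeastLE_mul_le [MeasurableSpace Ω] {μ : Measure Ω} [IsProbabilityMeasure μ]
    {X : ι → Ω → ℝ} (hX : iIndepFun X μ)
    (hsub : ∀ i, ∀ x ∈ Set.Icc (0 : ℝ) 1, μ {ω | X i ω ≤ x} ≤ ENNReal.ofReal x)
    {y : ℝ} (hy : 0 ≤ y) (j : ℕ) :
    μ.real (atLeastLE X j (j * y)) ≤ (exp 1 * Fintype.card ι * y) ^ j :=
  (measureReal_atLeastLE_le hX hsub (by positivity) j).trans
    (choose_mul_mul_pow_le_exp_mul_pow _ _ hy)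

end AtLeastLE

theorem integral_le_add_intervalIntegral_of_measureReal_lt_le [MeasurableSpace Ω]
    {μ : Measure Ω} [IsProbabilityMeasure μ] {f : Ω → ℝ} (hf : Integrable f μ) (hf0 : 0 ≤ f)
    (hf1 : f ≤ 1) {a : ℝ} (ha0 : 0 ≤ a) (ha1 : a ≤ 1) {h : ℝ → ℝ}
    (hh : IntervalIntegrable h volume a 1)
    (htail : ∀ t ∈ Set.Icc a 1, μ.real {ω | t < f ω} ≤ h t) :
    ∫ ω, f ω ∂μ ≤ a + ∫ t in a..1, h t := by
  set F : ℝ → ℝ := fun t => μ.real {ω | t < f ω}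
  have hF : Antitone F := fun s t hst => measureReal_mono fun ω hω => hst.trans_lt hω
  have hF_zero : ∀ t, 1 < t → F t = 0 := fun t ht => by
    have : {ω | t < f ω} = ∅ :=
      Set.eq_empty_of_forall_notMem fun ω hω => not_lt.2 (hf1 ω) (ht.trans hω)
    simp [F, this]
  calc ∫ ω, f ω ∂μ = ∫ t in Set.Ioi 0, F t := hf.integral_eq_integral_meas_lt (ae_of_all _ hf0)
    _ = ∫ t in (0 : ℝ)..1, F t := by
        rw [intervalIntegral.integral_of_le zero_le_one]
        refine setIntegral_eq_of_subset_of_forall_sdiff_eq_zero measurableSet_Ioi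
          Set.Ioc_subset_Ioi_self fun t ht => hF_zero t ?_
        simpa using ht
    _ = (∫ t in (0 : ℝ)..a, F t) + ∫ t in a..1, F t :=
        (intervalIntegral.integral_add_adjacent_intervals hF.intervalIntegrable
          hF.intervalIntegrable).symm
    _ ≤ (∫ _ in (0 : ℝ)..a, (1 : ℝ)) + ∫ t in a..1, h t := by
        gcongr
        · exact intervalIntegral.integral_mono_on ha0 hF.intervalIntegrable
            intervalIntegrable_const fun t _ => measureReal_le_one
        · exact intervalIntegral.integral_mono_on ha1 hF.intervalIntegrable hh htail
    _ = a + ∫ t in a..1, h t := by simp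

theorem integral_div_sub_self {α β b : ℝ} (hα : 0 < α) (hb : α + β ≤ b) :
    ∫ t in (α + β)..b, β / (t - β) = β * log ((b - β) / α) := by
  rw [intervalIntegral.integral_comp_sub_right (fun s => β / s) β, add_sub_cancel_right]
  simp_rw [div_eq_mul_inv β]
  rw [intervalIntegral.integral_const_mul, integral_inv_of_pos hα (by linarith)]

theorem intervalIntegrable_div_sub_self {α β b : ℝ} (hα : 0 < α) (hb : α + β ≤ b) :
    IntervalIntegrable (fun t => β / (t - β)) volume (α + β) b := by
  refine (continuousOn_const.div (continuousOn_id.sub continuousOn_const) ?_).intervalIntegrable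
  intro t ht
  rw [Set.uIcc_of_le hb] at ht
  exact (sub_pos.2 (by linarith [ht.1] : β < t)).ne'

theorem add_add_mul_log_le_four_mul_log {α : ℝ} (hα0 : 0 < α) (hα1 : α ≤ 1) :
    α + exp 1 * α + exp 1 * α * log (1 / α) ≤ 4 * α * log (9 / α) := by
  have he : exp 1 < 3 := by linarith [exp_one_lt_d9]
  have hlog9 : 1 ≤ log 9 := by rw [le_log_iff_exp_le (by norm_num)]; linarith
  have hlogα : 0 ≤ log (1 / α) := log_nonneg (by rw [le_div_iff₀ hα0]; linarith)
  rw [show 9 / α = 9 * (1 / α) by ring, log_mul (by norm_num) (by positivity)]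
  nlinarith [mul_nonneg hα0.le hlogα]

section FDP

variable {n : ℕ} {α u : ℝ} {H0 : Finset (Fin n)} {p : Fin n → Ω → ℝ} {k : ℕ} {ω : Ω}

noncomputable def maxSelectedFDP (n : ℕ) (α : ℝ) (H0 : Finset (Fin n)) (p : Fin n → Ω → ℝ)
    (ω : Ω) : ℝ :=
  (range (n + 1)).sup' ⟨0, by simp⟩
    fun k => if FDPhat n α p k ω ≤ α then FDP n α H0 p k ω else 0

theorem FDP_nonneg : 0 ≤ FDP n α H0 p k ω :=
  div_nonneg (Nat.cast_nonneg _) (le_max_of_le_right zero_le_one)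

theorem FDP_le_one : FDP n α H0 p k ω ≤ 1 :=
  div_le_one_of_le₀ (le_max_of_le_left (by exact_mod_cast card_le_card inter_subset_left))
    (le_max_of_le_right zero_le_one)

theorem maxSelectedFDP_nonneg : 0 ≤ maxSelectedFDP n α H0 p ω := by
  refine le_trans ?_ (le_sup' _ (mem_range.2 (Nat.succ_pos n)))
  split_ifs
  exacts [FDP_nonneg, le_rfl]

theorem maxSelectedFDP_le_one : maxSelectedFDP n α H0 p ω ≤ 1 :=
  sup'_le _ _ fun k _ => by split_ifs; exacts [FDP_le_one, zero_le_one]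

theorem mul_le_of_FDPhat_le {i : Fin n} (hhat : FDPhat n α p k ω ≤ α)
    (hi : i ∈ Rset n α p k ω) : n * p i ω ≤ α * #(Rset n α p k ω) := by
  have hR : (Rset n α p k ω).Nonempty := ⟨i, hi⟩
  have hcard : (1 : ℝ) ≤ #(Rset n α p k ω) := by exact_mod_cast hR.card_pos
  rw [FDPhat, dif_pos hR, max_eq_left hcard, div_le_iff₀ (by positivity)] at hhat
  calc n * p i ω ≤ n * (Rset n α p k ω).sup' hR (fun i => p i ω) := by
        gcongr; exact le_sup' (fun i => p i ω) hi
    _ ≤ α * #(Rset n α p k ω) := hhat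

theorem mul_card_lt_of_lt_FDP (hu : 0 ≤ u) (h : u < FDP n α H0 p k ω) :
    u * #(Rset n α p k ω) < #(Rset n α p k ω ∩ H0) := by
  rcases (Rset n α p k ω).eq_empty_or_nonempty with hR | hR
  · simp [FDP, hR] at h
    linarith
  · have hcard : (1 : ℝ) ≤ #(Rset n α p k ω) := by exact_mod_cast hR.card_pos
    rwa [FDP, max_eq_left hcard, lt_div_iff₀ (by linarith)] at h

theorem exists_mem_atLeastLE_of_lt_FDP (hα : 0 < α) (hu : 0 < u)
    (hhat : FDPhat n α p k ω ≤ α) (hFDP : u < FDP n α H0 p k ω) :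
    ∃ j ∈ Icc 1 #H0, ω ∈ atLeastLE (fun i : H0 => p i) j (j * (α / (u * n))) := by
  set R := Rset n α p k ω
  have hcard := mul_card_lt_of_lt_FDP hu.le hFDP
  obtain ⟨i₀, hi₀⟩ : (R ∩ H0).Nonempty :=
    card_pos.1 (by exact_mod_cast (by positivity : (0 : ℝ) ≤ u * #R).trans_lt hcard)
  have hn : (0 : ℝ) < n := by exact_mod_cast i₀.pos
  have hle : ∀ i ∈ R ∩ H0, p i ω ≤ #(R ∩ H0) * (α / (u * n)) := by
    intro i hi
    have hi' := mul_le_of_FDPhat_le hhat (mem_inter.1 hi).1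
    rw [← mul_div_assoc, le_div_iff₀ (by positivity)]
    nlinarith [mul_le_mul_of_nonneg_right hi' hu.le]
  refine ⟨#(R ∩ H0), mem_Icc.2 ⟨card_pos.2 ⟨i₀, hi₀⟩, card_le_card inter_subset_right⟩, ?_⟩
  exact card_le_card_of_surjOn Subtype.val fun i hi =>
    ⟨⟨i, (mem_inter.1 hi).2⟩, by simpa using hle i hi, rfl⟩

theorem setOf_lt_maxSelectedFDP_subset (hα : 0 < α) (hu : 0 < u) :
    {ω | u < maxSelectedFDP n α H0 p ω} ⊆
      ⋃ j ∈ Icc 1 #H0, atLeastLE (fun i : H0 => p i) j (j * (α / (u * n))) := by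
  intro ω (hω : u < maxSelectedFDP n α H0 p ω)
  obtain ⟨k, -, hk⟩ := (lt_sup'_iff _).1 hω
  split_ifs at hk with hhat
  · obtain ⟨j, hj, hmem⟩ := exists_mem_atLeastLE_of_lt_FDP hα hu hhat hk
    exact Set.mem_biUnion hj hmem
  · exact absurd hk hu.not_gt

end FDP

theorem measureReal_lt_maxSelectedFDP_le [MeasureSpace Ω] [IsProbabilityMeasure (ℙ : Measure Ω)]
    {n : ℕ} {α : ℝ} (hα : 0 < α) (H0 : Finset (Fin n)) (p : Fin n → Ω → ℝ)
    (hsubunif : ∀ i ∈ H0, ∀ x ∈ Set.Icc (0 : ℝ) 1, ℙ {ω | p i ω ≤ x} ≤ ENNReal.ofReal x)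
    (hindep : iIndepFun (fun i : H0 => p i) ℙ) {u : ℝ} (hu : exp 1 * α < u) :
    (ℙ : Measure Ω).real {ω | u < maxSelectedFDP n α H0 p ω} ≤ exp 1 * α / (u - exp 1 * α) := by
  have hu0 : 0 < u := (by positivity : 0 < exp 1 * α).trans hu
  set q := exp 1 * α / u
  have hq0 : 0 ≤ q := by positivity
  have hq1 : q < 1 := (div_lt_one hu0).2 hu
  have hH0 : (#H0 : ℝ) ≤ n := by exact_mod_cast (card_le_univ H0).trans_eq (Fintype.card_fin n)
  have hratio : exp 1 * #H0 * (α / (u * n)) ≤ q :=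
    calc exp 1 * #H0 * (α / (u * n)) = q * (#H0 / n) := by ring
      _ ≤ q := mul_le_of_le_one_right hq0 (div_le_one_of_le₀ hH0 n.cast_nonneg)
  set E : ℕ → Set Ω := fun j => atLeastLE (fun i : H0 => p i) j (j * (α / (u * n)))
  have hterm : ∀ j, (ℙ : Measure Ω).real (E j) ≤ q ^ j := by
    intro j
    have hy : 0 ≤ α / (u * n) := by positivity
    have h := measureReal_atLeastLE_mul_le hindep (fun i => hsubunif i i.2) hy j
    rw [Fintype.card_coe] at h
    exact h.trans (pow_le_pow_left₀ (by positivity) hratio j)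
  calc (ℙ : Measure Ω).real {ω | u < maxSelectedFDP n α H0 p ω}
      ≤ (ℙ : Measure Ω).real (⋃ j ∈ Icc 1 #H0, E j) :=
        measureReal_mono (setOf_lt_maxSelectedFDP_subset hα hu0) (measure_ne_top _ _)
    _ ≤ ∑ j ∈ Icc 1 #H0, (ℙ : Measure Ω).real (E j) := measureReal_biUnion_finset_le _ _
    _ ≤ ∑ j ∈ Icc 1 #H0, q ^ j := sum_le_sum fun j _ => hterm j
    _ ≤ q / (1 - q) := by
        rw [← Ico_add_one_right_eq_Icc]
        simpa using geom_sum_Ico_le_of_lt_one (m := 1) (n := #H0 + 1) hq0 hq1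
    _ = exp 1 * α / (u - exp 1 * α) := by
        rw [one_sub_div hu0.ne', div_div_div_cancel_right₀ hu0.ne']

/-- Theorem 1 (anytime FDR control for BH-type selections), simplified form. -/
theorem expected_max_FDP_le_four_alpha_log [MeasureSpace Ω]
    [IsProbabilityMeasure (ℙ : Measure Ω)]
    {n : ℕ} {α : ℝ} (hα0 : 0 < α) (hα1 : α < Real.exp (-1))
    (H0 : Finset (Fin n))
    (p : Fin n → Ω → ℝ)
    (hsubunif : ∀ i ∈ H0, ∀ x ∈ Set.Icc (0 : ℝ) 1,
      ℙ {ω | p i ω ≤ x} ≤ ENNReal.ofReal x)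
    (hindep : iIndepFun
      (fun i : {i // i ∈ H0} => p i.1) ℙ) :
    ∫ ω, (Finset.range (n + 1)).sup' ⟨0, by simp⟩
        (fun k => if FDPhat n α p k ω ≤ α then FDP n α H0 p k ω else 0) ∂ℙ
      ≤ 4 * α * Real.log (9 / α) := by
  change ∫ ω, maxSelectedFDP n α H0 p ω ≤ _
  set β := exp 1 * α
  have hβ : 0 < β := by positivity
  have hα1' : α ≤ 1 := (hα1.trans (exp_lt_one_iff.2 (by norm_num))).le
  have hbound := add_add_mul_log_le_four_mul_log hα0 hα1'
  have hαβ : α + β ≤ 4 * α * log (9 / α) :=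
    le_trans (by nlinarith [log_nonneg (one_le_one_div hα0 hα1')]) hbound
  by_cases hint : Integrable (maxSelectedFDP n α H0 p)
  swap
  · rw [integral_undef hint]
    linarith
  rcases le_or_gt 1 (α + β) with hbig | hsmall
  · calc ∫ ω, maxSelectedFDP n α H0 p ω ≤ ∫ _ : Ω, (1 : ℝ) :=
          integral_mono hint (integrable_const 1) fun ω => maxSelectedFDP_le_one
      _ ≤ 4 * α * log (9 / α) := by simpa using hbig.trans hαβ
  calc ∫ ω, maxSelectedFDP n α H0 p ω
      ≤ (α + β) + ∫ t in (α + β)..1, β / (t - β) :=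
        integral_le_add_intervalIntegral_of_measureReal_lt_le hint
          (fun ω => maxSelectedFDP_nonneg) (fun ω => maxSelectedFDP_le_one) (by positivity)
          hsmall.le (intervalIntegrable_div_sub_self hα0 hsmall.le) fun t ht =>
            measureReal_lt_maxSelectedFDP_le hα0 H0 p hsubunif hindep (by linarith [ht.1])
    _ = α + β + β * log ((1 - β) / α) := by rw [integral_div_sub_self hα0 hsmall.le]
    _ ≤ α + β + β * log (1 / α) := by
        gcongr
        · exact div_pos (by linarith) hα0
        · linarith
    _ ≤ 4 * α * log (9 / α) := hbound
end

section
/- Fix α ∈ (0, e^{-1}) and an integer n ≥ 2. Let H0 ⊆ {1,…,n} be nonempty, let p_1,…,p_n be random variables with values in (0,1], and suppose there exist random variables {q_i}_{i∈H0} that are mutually independent, sub-uniform, and satisfy q_i ≤ p_i almost surely for every i ∈ H0. Define k̂ = max{ k ∈ {1,…,n} : |{i : p_i ≤ αk/n}| ≥ k } (and k̂ = 0 if no such k exists), and let S = {i : p_i ≤ α·k̂/n}. Then the false discovery rate of S is controlled: E[ |S ∩ H0| / max(|S|, 1) ] ≤ 4α·log(9/α). -/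
open MeasureTheory ProbabilityTheory Finset

variable {Ω : Type*}

/-- The Benjamini–Hochberg index `k̂ = max {k ∈ {1,…,n} : |{i : p_i ≤ α k / n}| ≥ k}`,
with `k̂ = 0` if no such `k` exists (the `Finset.sup` of the empty set is `0`). -/
noncomputable def khat (n : ℕ) (α : ℝ) (p : Fin n → Ω → ℝ) (ω : Ω) : ℕ :=
  ((Finset.Icc 1 n).filter (fun k => k ≤ (Rset n α p k ω).card)).sup id

/-- The Benjamini–Hochberg rejection set `S = {i : p_i ≤ α k̂ / n}`. -/
noncomputable def BHset (n : ℕ) (α : ℝ) (p : Fin n → Ω → ℝ) (ω : Ω) : Finset (Fin n) :=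
  Rset n α p (khat n α p ω) ω

/-!
On the event `q_i ≤ p_i` (all `i ∈ H0`), put `k = max k̂ 1`: then `|S| ≥ k` and every null in `S`
has `q_i ≤ α k / n`, so the false discovery proportion is at most
`M = min 1 (max_{1 ≤ k ≤ n} V(α k / n) / k)`, where `V(t)` counts the nulls with `q_i ≤ t`.
By the layer-cake formula `E M = ∫₀¹ P(M ≥ u) du`. If `u k ≤ V(α k / n)` and
`2^j ≤ V(α k / n) < 2^(j+1)`, then `2^j ≤ V(α 2^(j+1) / (u n))`; independence and
sub-uniformity give `P(V(t) ≥ a) ≤ C(|H0|, a) t^a ≤ (e |H0| t / a)^a`, and summing over `j`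
yields `P(M ≥ u) ≤ 2α/u + 2(2eα/u)²` for `u ≥ 4eα`. Integrating this bound from
`min 1 (4eα)` to `1` gives `4α log(9/α)`.
-/

open Real

def IsSubUniform [MeasurableSpace Ω] (μ : Measure Ω) (X : Ω → ℝ) : Prop :=
  ∀ x ∈ Set.Icc (0 : ℝ) 1, μ {ω | X ω ≤ x} ≤ ENNReal.ofReal x

lemma IsSubUniform.measure_le_le [MeasurableSpace Ω] {μ : Measure Ω} [IsProbabilityMeasure μ]
    {X : Ω → ℝ} (hX : IsSubUniform μ X) {x : ℝ} (hx : 0 ≤ x) :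
    μ {ω | X ω ≤ x} ≤ ENNReal.ofReal x := by
  rcases le_total x 1 with hx1 | hx1
  · exact hX x ⟨hx, hx1⟩
  · exact prob_le_one.trans (ENNReal.one_le_ofReal.mpr hx1)

lemma Nat.choose_mul_pow_le_exp_mul_div_pow (m a : ℕ) {t : ℝ} (ht : 0 ≤ t) :
    (m.choose a : ℝ) * t ^ a ≤ (exp 1 * m * t / a) ^ a := by
  rcases Nat.eq_zero_or_pos a with rfl | ha
  · simp
  have hpow : (a : ℝ) ^ a ≤ exp 1 ^ a * a.factorial := by
    rw [← div_le_iff₀ (by positivity), exp_one_pow]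
    exact Real.pow_div_factorial_le_exp _ (Nat.cast_nonneg a) a
  calc (m.choose a : ℝ) * t ^ a ≤ (m : ℝ) ^ a / a.factorial * t ^ a := by
        gcongr; exact Nat.choose_le_pow_div a m
    _ = (m * t) ^ a / a.factorial := by ring
    _ ≤ (m * t) ^ a * exp 1 ^ a / (a : ℝ) ^ a := by
        rw [div_le_div_iff₀ (by positivity) (by positivity), mul_assoc]
        gcongr
    _ = (exp 1 * m * t / a) ^ a := by ring

section Counting

variable {ι : Type*} [Fintype ι] {X : ι → Ω → ℝ}

noncomputable def countLE (X : ι → Ω → ℝ) (t : ℝ) (ω : Ω) : ℕ := #{i | X i ω ≤ t}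

lemma countLE_mono (X : ι → Ω → ℝ) (ω : Ω) : Monotone fun t => countLE X t ω :=
  fun _ _ hst => card_le_card fun _ hi => by
    simp only [mem_filter, mem_univ, true_and] at hi ⊢
    exact hi.trans hst

lemma exists_two_pow_le_countLE {ω : Ω} {s u k : ℝ} (hs : 0 ≤ s) (hu : 0 < u) (hk : 0 < k)
    (h : u * k ≤ countLE X (s * k) ω) : ∃ j : ℕ, 2 ^ j ≤ countLE X (s * 2 ^ (j + 1) / u) ω := by
  set N := countLE X (s * k) ω
  have hN : N ≠ 0 := by
    rintro hN0
    rw [hN0, Nat.cast_zero] at h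
    exact (mul_pos hu hk).not_ge h
  refine ⟨Nat.log 2 N, (Nat.pow_log_le_self 2 hN).trans (countLE_mono X ω ?_)⟩
  have hNlt : (N : ℝ) < 2 ^ (Nat.log 2 N + 1) := mod_cast Nat.lt_pow_succ_log_self one_lt_two N
  rw [mul_div_assoc]
  exact mul_le_mul_of_nonneg_left ((le_div_iff₀' hu).mpr (h.trans hNlt.le)) hs

variable [MeasurableSpace Ω] {μ : Measure Ω}

lemma measure_le_countLE_le [IsProbabilityMeasure μ] (hX : iIndepFun X μ)
    (hsub : ∀ i, IsSubUniform μ (X i)) {t : ℝ} (ht : 0 ≤ t) (a : ℕ) :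
    μ {ω | a ≤ countLE X t ω} ≤ ENNReal.ofReal ((Fintype.card ι).choose a * t ^ a) := by
  have hcover : {ω | a ≤ countLE X t ω} ⊆ ⋃ A ∈ powersetCard a univ, ⋂ i ∈ A, {ω | X i ω ≤ t} := by
    intro ω hω
    obtain ⟨A, hA, rfl⟩ := exists_subset_card_eq hω
    simp only [Set.mem_iUnion, Set.mem_iInter]
    exact ⟨A, mem_powersetCard_univ.mpr rfl, fun i hi => (mem_filter.mp (hA hi)).2⟩
  have hinter : ∀ A ∈ powersetCard a (univ : Finset ι),
      μ (⋂ i ∈ A, {ω | X i ω ≤ t}) ≤ ENNReal.ofReal t ^ a := by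
    intro A hA
    rw [hX.meas_biInter (s := fun i => {ω | X i ω ≤ t})
        fun i _ => ⟨Set.Iic t, measurableSet_Iic, rfl⟩,
      ← (mem_powersetCard_univ.mp hA)]
    exact prod_le_pow_card _ _ _ fun i _ => (hsub i).measure_le_le ht
  calc μ {ω | a ≤ countLE X t ω}
      ≤ ∑ A ∈ powersetCard a univ, μ (⋂ i ∈ A, {ω | X i ω ≤ t}) :=
        (measure_mono hcover).trans (measure_biUnion_finset_le _ _)
    _ ≤ ∑ A ∈ powersetCard a (univ : Finset ι), ENNReal.ofReal t ^ a := sum_le_sum hinter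
    _ = ENNReal.ofReal ((Fintype.card ι).choose a * t ^ a) := by
        rw [sum_const, card_powersetCard, card_univ, nsmul_eq_mul,
          ENNReal.ofReal_mul (by positivity), ENNReal.ofReal_pow ht, ENNReal.ofReal_natCast]

lemma measure_le_countLE_le_pow [IsProbabilityMeasure μ] (hX : iIndepFun X μ)
    (hsub : ∀ i, IsSubUniform μ (X i)) {t c : ℝ} (ht : 0 ≤ t) {a : ℕ}
    (hc : exp 1 * Fintype.card ι * t / a ≤ c) :
    μ {ω | a ≤ countLE X t ω} ≤ ENNReal.ofReal (c ^ a) :=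
  (measure_le_countLE_le hX hsub ht a).trans <| ENNReal.ofReal_le_ofReal <|
    (Nat.choose_mul_pow_le_exp_mul_div_pow _ _ ht).trans (pow_le_pow_left₀ (by positivity) hc _)

lemma measure_exists_mul_le_countLE_le [IsProbabilityMeasure μ] (hX : iIndepFun X μ)
    (hsub : ∀ i, IsSubUniform μ (X i)) {n : ℕ} (hn : Fintype.card ι ≤ n) {α u : ℝ}
    (hα : 0 ≤ α) (hu : 0 < u) (hαu : 4 * exp 1 * α ≤ u) :
    μ {ω | ∃ k : ℕ, 0 < k ∧ u * k ≤ countLE X (α * k / n) ω}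
      ≤ ENNReal.ofReal (2 * α / u + 2 * (2 * exp 1 * α / u) ^ 2) := by
  set c := 2 * exp 1 * α / u
  have hc : 0 ≤ c := by positivity
  have hc_half : c ≤ 1 / 2 := by rw [div_le_iff₀ hu]; linarith
  set t : ℕ → ℝ := fun j => α / n * 2 ^ (j + 1) / u
  have ht : ∀ j, 0 ≤ t j := fun j => by positivity
  have hmt : ∀ j, Fintype.card ι * t j ≤ α * 2 ^ (j + 1) / u := fun j => by
    have : (Fintype.card ι : ℝ) / n ≤ 1 := div_le_one_of_le₀ (mod_cast hn) (Nat.cast_nonneg n)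
    calc (Fintype.card ι : ℝ) * t j = (Fintype.card ι / n) * (α * 2 ^ (j + 1) / u) := by ring
      _ ≤ α * 2 ^ (j + 1) / u := mul_le_of_le_one_left (by positivity) this
  have hcover : {ω | ∃ k : ℕ, 0 < k ∧ u * k ≤ countLE X (α * k / n) ω}
      ⊆ ⋃ j, {ω | 2 ^ j ≤ countLE X (t j) ω} := by
    rintro ω ⟨k, hk, hω⟩
    rw [mul_div_right_comm] at hω
    exact Set.mem_iUnion.mpr (exists_two_pow_le_countLE (by positivity) hu (mod_cast hk) hω)
  -- The `j = 0` term avoids the factor `e` of the general bound: it carries the `log (1 / α)`.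
  have hfirst : μ {ω | 2 ^ 0 ≤ countLE X (t 0) ω} ≤ ENNReal.ofReal (2 * α / u) := by
    refine (measure_le_countLE_le hX hsub (ht 0) _).trans (ENNReal.ofReal_le_ofReal ?_)
    simpa [mul_comm 2 α] using hmt 0
  have hrest : ∀ j, μ {ω | 2 ^ (j + 1) ≤ countLE X (t (j + 1)) ω}
      ≤ ENNReal.ofReal (c ^ 2 * (1 / 2) ^ j) := fun j => by
    have hbase : exp 1 * Fintype.card ι * t (j + 1) / (2 ^ (j + 1) : ℕ) ≤ c := by
      rw [div_le_iff₀ (by positivity), mul_assoc]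
      calc exp 1 * (Fintype.card ι * t (j + 1)) ≤ exp 1 * (α * 2 ^ (j + 1 + 1) / u) := by
            gcongr; exact hmt _
        _ = c * (2 ^ (j + 1) : ℕ) := by push_cast; ring
    refine (measure_le_countLE_le_pow hX hsub (ht _) hbase).trans (ENNReal.ofReal_le_ofReal ?_)
    calc c ^ 2 ^ (j + 1) ≤ c ^ (j + 2) := pow_le_pow_of_le_one hc (by linarith) (by
          have := Nat.lt_two_pow_self (n := j); rw [pow_succ]; omega)
      _ ≤ c ^ 2 * (1 / 2) ^ j := by rw [pow_add, mul_comm]; gcongr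
  calc μ {ω | ∃ k : ℕ, 0 < k ∧ u * k ≤ countLE X (α * k / n) ω}
      ≤ ∑' j, μ {ω | 2 ^ j ≤ countLE X (t j) ω} := (measure_mono hcover).trans (measure_iUnion_le _)
    _ = μ {ω | 2 ^ 0 ≤ countLE X (t 0) ω} + ∑' j, μ {ω | 2 ^ (j + 1) ≤ countLE X (t (j + 1)) ω} :=
        tsum_eq_zero_add' ENNReal.summable
    _ ≤ ENNReal.ofReal (2 * α / u) + ∑' j, ENNReal.ofReal (c ^ 2 * (1 / 2) ^ j) :=
        add_le_add hfirst (ENNReal.tsum_le_tsum hrest)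
    _ = ENNReal.ofReal (2 * α / u + 2 * c ^ 2) := by
        rw [← ENNReal.ofReal_tsum_of_nonneg (fun j => by positivity)
          (summable_geometric_two.mul_left _), tsum_mul_left, tsum_geometric_two, mul_comm (c ^ 2),
          ENNReal.ofReal_add (by positivity) (by positivity)]

end Counting

lemma setIntegral_Ioc_zero_one_le_of_le_div_add_div_sq {F : ℝ → ℝ} {u₀ A B : ℝ}
    (hF : IntegrableOn F (Set.Ioc 0 1)) (hu₀ : 0 < u₀) (hu₀1 : u₀ ≤ 1)
    (hF1 : ∀ u ∈ Set.Ioc 0 u₀, F u ≤ 1)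
    (htail : ∀ u ∈ Set.Ioc u₀ 1, F u ≤ A / u + B / u ^ 2) :
    ∫ u in Set.Ioc 0 1, F u ≤ u₀ + A * log (1 / u₀) + B * (1 / u₀ - 1) := by
  have hpos : ∀ u ∈ Set.uIcc u₀ 1, 0 < u := fun u hu =>
    hu₀.trans_le (Set.uIcc_of_le hu₀1 ▸ hu).1
  have hderiv : ∀ u ∈ Set.uIcc u₀ 1,
      HasDerivAt (fun u => A * log u - B * u⁻¹) (A / u + B / u ^ 2) u := fun u hu =>
    (((hasDerivAt_log (hpos u hu).ne').const_mul A).sub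
      ((hasDerivAt_inv (hpos u hu).ne').const_mul B)).congr_deriv (by ring)
  have hcont : ContinuousOn (fun u => A / u + B / u ^ 2) (Set.uIcc u₀ 1) :=
    ContinuousOn.add (continuousOn_const.div continuousOn_id fun u hu => (hpos u hu).ne')
      (continuousOn_const.div (continuousOn_id.pow 2) fun u hu => by have := hpos u hu; positivity)
  have hhead : ∫ u in Set.Ioc 0 u₀, F u ≤ u₀ := by
    calc ∫ u in Set.Ioc 0 u₀, F u ≤ ∫ _ in Set.Ioc 0 u₀, (1 : ℝ) :=
          setIntegral_mono_on (hF.mono_set (Set.Ioc_subset_Ioc_right hu₀1))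
            (integrableOn_const measure_Ioc_lt_top.ne) measurableSet_Ioc hF1
      _ = u₀ := by simp [hu₀.le]
  have hbulk : ∫ u in Set.Ioc u₀ 1, F u ≤ A * log (1 / u₀) + B * (1 / u₀ - 1) := by
    calc ∫ u in Set.Ioc u₀ 1, F u ≤ ∫ u in Set.Ioc u₀ 1, (A / u + B / u ^ 2) :=
          setIntegral_mono_on (hF.mono_set (Set.Ioc_subset_Ioc_left hu₀.le))
            ((intervalIntegrable_iff_integrableOn_Ioc_of_le hu₀1).mp hcont.intervalIntegrable)
            measurableSet_Ioc htail
      _ = A * log (1 / u₀) + B * (1 / u₀ - 1) := by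
          rw [← intervalIntegral.integral_of_le hu₀1,
            intervalIntegral.integral_eq_sub_of_hasDerivAt hderiv hcont.intervalIntegrable,
            log_one, inv_one, one_div, log_inv]
          ring
  rw [← Set.Ioc_union_Ioc_eq_Ioc hu₀.le hu₀1, setIntegral_union (Set.Ioc_disjoint_Ioc_of_le le_rfl)
    measurableSet_Ioc (hF.mono_set (Set.Ioc_subset_Ioc_right hu₀1))
    (hF.mono_set (Set.Ioc_subset_Ioc_left hu₀.le))]
  linarith

lemma min_add_log_le_four_mul_log {α : ℝ} (hα0 : 0 < α) (hα1 : α < exp (-1)) :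
    min 1 (4 * exp 1 * α) + 2 * α * log (1 / min 1 (4 * exp 1 * α))
      + 2 * (2 * exp 1 * α) ^ 2 * (1 / min 1 (4 * exp 1 * α) - 1) ≤ 4 * α * log (9 / α) := by
  have he : exp 1 < 2.7182818286 := exp_one_lt_d9
  have hlog2 : 0.6931471803 < log 2 := log_two_gt_d9
  have hlog9 : 2 < log 9 := by
    rw [lt_log_iff_exp_lt (by norm_num), show (2 : ℝ) = 1 + 1 by norm_num, exp_add]
    nlinarith [exp_pos 1]
  have hlogα : log α < -1 := by
    simpa using log_lt_log hα0 hα1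
  rw [log_div (by norm_num) hα0.ne']
  rcases le_total 1 (4 * exp 1 * α) with h | h
  · rw [min_eq_left h, div_one, log_one, sub_self, mul_zero, mul_zero, add_zero, add_zero]
    nlinarith [mul_le_mul_of_nonneg_left (show exp 1 ≤ log 9 - log α by linarith) hα0.le]
  · rw [min_eq_right h, one_div, log_inv]
    have hlogu : log (4 * exp 1 * α) = 2 * log 2 + 1 + log α := by
      rw [log_mul (by positivity) hα0.ne', log_mul (by norm_num) (exp_pos 1).ne', log_exp,
        show (4 : ℝ) = 2 ^ 2 by norm_num, log_pow]
      push_cast; ring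
    have hlogα' : 2 * log 2 + 1 + log α ≤ 0 := hlogu ▸ log_nonpos (by positivity) h
    have hB : 2 * (2 * exp 1 * α) ^ 2 * (4 * exp 1 * α)⁻¹ = 2 * exp 1 * α := by
      field_simp; norm_num
    rw [hlogu, mul_sub, hB]
    nlinarith [mul_le_mul_of_nonneg_left hlogα' hα0.le, exp_pos 1]

section MaxCountRatio

variable {ι : Type*} [Fintype ι] {X : ι → Ω → ℝ} {α : ℝ} {n : ℕ} [NeZero n]

noncomputable def maxCountRatio (X : ι → Ω → ℝ) (α : ℝ) (n : ℕ) [NeZero n] (ω : Ω) : ℝ :=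
  min 1 ((Icc 1 n).sup' (nonempty_Icc.mpr NeZero.one_le)
    fun k => (countLE X (α * k / n) ω : ℝ) / k)

lemma maxCountRatio_nonneg (ω : Ω) : 0 ≤ maxCountRatio X α n ω :=
  le_min zero_le_one <| (le_sup'_iff _).mpr ⟨1, mem_Icc.mpr ⟨le_rfl, NeZero.one_le⟩, by positivity⟩

lemma maxCountRatio_le_one (ω : Ω) : maxCountRatio X α n ω ≤ 1 := min_le_left _ _

lemma le_maxCountRatio {ω : Ω} {y : ℝ} {k : ℕ} (hk : k ∈ Icc 1 n) (hy1 : y ≤ 1)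
    (hy : y ≤ countLE X (α * k / n) ω / k) : y ≤ maxCountRatio X α n ω :=
  le_min hy1 <| (le_sup'_iff _).mpr ⟨k, hk, hy⟩

lemma exists_mul_le_countLE_of_le_maxCountRatio {ω : Ω} {u : ℝ} (h : u ≤ maxCountRatio X α n ω) :
    ∃ k : ℕ, 0 < k ∧ u * k ≤ countLE X (α * k / n) ω := by
  obtain ⟨k, hk, hu⟩ := (le_sup'_iff _).mp (h.trans (min_le_right _ _))
  have hk0 : 0 < k := (mem_Icc.mp hk).1
  exact ⟨k, hk0, (le_div_iff₀ (by exact_mod_cast hk0)).mp hu⟩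

variable [MeasurableSpace Ω] {μ : Measure Ω}

lemma measurable_maxCountRatio (hX : ∀ i, Measurable (X i)) :
    Measurable (maxCountRatio X α n) := by
  refine measurable_const.min ?_
  have hcount : ∀ t, Measurable fun ω => (countLE X t ω : ℝ) := fun t => by
    simp only [countLE, card_filter, Nat.cast_sum, Nat.cast_ite, Nat.cast_one, Nat.cast_zero]
    exact Finset.measurable_sum _ fun i _ =>
      Measurable.ite (hX i measurableSet_Iic) measurable_const measurable_const
  convert Finset.measurable_sup' (s := Icc 1 n) (nonempty_Icc.mpr NeZero.one_le)
    fun k _ => (hcount (α * k / n)).div_const (k : ℝ) using 1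
  ext ω
  rw [Finset.sup'_apply]

lemma integrable_maxCountRatio [IsFiniteMeasure μ] (hX : ∀ i, Measurable (X i)) :
    Integrable (maxCountRatio X α n) μ :=
  Integrable.of_bound (measurable_maxCountRatio hX).aestronglyMeasurable 1
    (ae_of_all _ fun ω => by
      rw [Real.norm_of_nonneg (maxCountRatio_nonneg ω)]; exact maxCountRatio_le_one ω)

lemma integral_maxCountRatio_le [IsProbabilityMeasure μ] (hX : iIndepFun X μ)
    (hsub : ∀ i, IsSubUniform μ (X i)) (hmeas : ∀ i, Measurable (X i))
    (hn : Fintype.card ι ≤ n) (hα0 : 0 < α) (hα1 : α < exp (-1)) :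
    ∫ ω, maxCountRatio X α n ω ∂μ ≤ 4 * α * log (9 / α) := by
  set M := maxCountRatio X α n
  have hMint : Integrable M μ := integrable_maxCountRatio hmeas
  have hanti : Antitone fun u => μ.real {ω | u ≤ M ω} := fun u v huv =>
    measureReal_mono fun ω hω => huv.trans hω
  rw [hMint.integral_eq_integral_Ioc_meas_le (ae_of_all _ maxCountRatio_nonneg)
    (ae_of_all _ maxCountRatio_le_one)]
  refine (setIntegral_Ioc_zero_one_le_of_le_div_add_div_sq
    (A := 2 * α) (B := 2 * (2 * exp 1 * α) ^ 2)
    ((hanti.antitoneOn _).integrableOn_isCompact isCompact_Icc |>.mono_set Set.Ioc_subset_Icc_self)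
    (by positivity) (min_le_left _ _) (fun _ _ => measureReal_le_one) ?_).trans
    (min_add_log_le_four_mul_log hα0 hα1)
  rintro u ⟨hu0, hu1⟩
  have hαu : 4 * exp 1 * α ≤ u := by
    rcases min_lt_iff.mp hu0 with h | h
    · exact absurd hu1 h.not_ge
    · exact h.le
  have hupos : 0 < u := (by positivity : (0 : ℝ) < 4 * exp 1 * α).trans_le hαu
  calc μ.real {ω | u ≤ M ω}
      ≤ (μ {ω | ∃ k : ℕ, 0 < k ∧ u * k ≤ countLE X (α * k / n) ω}).toReal :=
        ENNReal.toReal_mono (measure_ne_top _ _)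
          (measure_mono fun ω => exists_mul_le_countLE_of_le_maxCountRatio)
    _ ≤ 2 * α / u + 2 * (2 * exp 1 * α / u) ^ 2 :=
        ENNReal.toReal_le_of_le_ofReal (by positivity)
          (measure_exists_mul_le_countLE_le hX hsub hn hα0.le hupos hαu)
    _ = 2 * α / u + 2 * (2 * exp 1 * α) ^ 2 / u ^ 2 := by ring

end MaxCountRatio

lemma khat_le (n : ℕ) (α : ℝ) (p : Fin n → Ω → ℝ) (ω : Ω) : khat n α p ω ≤ n :=
  Finset.sup_le fun _ hk => (mem_Icc.mp (mem_filter.mp hk).1).2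

lemma khat_le_card_BHset (n : ℕ) (α : ℝ) (p : Fin n → Ω → ℝ) (ω : Ω) :
    khat n α p ω ≤ (BHset n α p ω).card := by
  rcases ((Icc 1 n).filter fun k => k ≤ (Rset n α p k ω).card).eq_empty_or_nonempty with hs | hs
  · simp [khat, hs]
  · obtain ⟨k, hk, hkeq⟩ := exists_mem_eq_sup _ hs id
    rw [BHset, khat, hkeq]
    exact (mem_filter.mp hk).2

lemma card_inter_div_card_BHset_le_maxCountRatio {n : ℕ} [NeZero n] {α : ℝ} (hα : 0 ≤ α)
    {H0 : Finset (Fin n)} {p q : Fin n → Ω → ℝ} {ω : Ω} (hqp : ∀ i ∈ H0, q i ω ≤ p i ω) :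
    ((BHset n α p ω ∩ H0).card : ℝ) / max ((BHset n α p ω).card : ℝ) 1
      ≤ maxCountRatio (fun i : H0 => q i) α n ω := by
  set S := BHset n α p ω
  set k := max (khat n α p ω) 1
  have hk : k ∈ Icc 1 n := mem_Icc.mpr ⟨le_max_right _ _, max_le (khat_le _ _ _ _) NeZero.one_le⟩
  have hnum : (S ∩ H0).card ≤ countLE (fun i : H0 => q i) (α * k / n) ω := by
    refine card_le_card_of_surjOn Subtype.val fun i hi => ?_
    obtain ⟨hiS, hiH0⟩ := mem_inter.mp hi
    refine ⟨⟨i, hiH0⟩, mem_filter.mpr ⟨mem_univ _, (hqp i hiH0).trans ?_⟩, rfl⟩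
    refine (mem_filter.mp hiS).2.trans ?_
    gcongr
    exact le_max_left _ _
  have hden : (k : ℝ) ≤ max (S.card : ℝ) 1 := by
    exact_mod_cast max_le_max (khat_le_card_BHset n α p ω) le_rfl
  refine le_maxCountRatio hk (div_le_one_of_le₀
    (le_max_of_le_left (mod_cast card_le_card inter_subset_left)) (by positivity)) ?_
  exact div_le_div₀ (by positivity) (mod_cast hnum) (by positivity) hden

theorem BH_FDR_control_general [MeasureSpace Ω] [IsProbabilityMeasure (ℙ : Measure Ω)]
    {n : ℕ} (hn : 2 ≤ n) {α : ℝ} (hα0 : 0 < α) (hα1 : α < Real.exp (-1))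
    (H0 : Finset (Fin n))
    (p : Fin n → Ω → ℝ)
    (q : Fin n → Ω → ℝ) (hqmeas : ∀ i ∈ H0, Measurable (q i))
    (hsubunif : ∀ i ∈ H0, ∀ x ∈ Set.Icc (0 : ℝ) 1,
      ℙ {ω | q i ω ≤ x} ≤ ENNReal.ofReal x)
    (hindep : iIndepFun
      (fun i : {i // i ∈ H0} => q i.1) ℙ)
    (hdom : ∀ i ∈ H0, ∀ᵐ ω ∂(ℙ : Measure Ω), q i ω ≤ p i ω) :
    ∫ ω, ((BHset n α p ω ∩ H0).card : ℝ) / max ((BHset n α p ω).card : ℝ) 1 ∂ℙ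
      ≤ 4 * α * Real.log (9 / α) := by
  have : NeZero n := ⟨by omega⟩
  have hmeas : ∀ i : H0, Measurable (q i) := fun i => hqmeas i i.2
  calc _ ≤ ∫ ω, maxCountRatio (fun i : H0 => q i) α n ω ∂ℙ :=
        integral_mono_of_nonneg (ae_of_all _ fun ω => by positivity)
          (integrable_maxCountRatio hmeas) (((Filter.eventually_all_finset H0).mpr hdom).mono
            fun ω => card_inter_div_card_BHset_le_maxCountRatio hα0.le)
    _ ≤ 4 * α * Real.log (9 / α) :=
        integral_maxCountRatio_le hindep (fun i => hsubunif i i.2) hmeas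
          (by simpa using card_le_univ H0) hα0 hα1

/-- Lemma 1: anytime FDR control of the Benjamini–Hochberg procedure applied to p-values
that dominate independent sub-uniform random variables on the nulls. -/
theorem BH_FDR_control [MeasureSpace Ω] [IsProbabilityMeasure (ℙ : Measure Ω)]
    {n : ℕ} (hn : 2 ≤ n) {α : ℝ} (hα0 : 0 < α) (hα1 : α < Real.exp (-1))
    (H0 : Finset (Fin n)) (hH0 : H0.Nonempty)
    (p : Fin n → Ω → ℝ) (hpmeas : ∀ i, Measurable (p i))
    (hprange : ∀ i ω, p i ω ∈ Set.Ioc (0 : ℝ) 1)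
    (q : Fin n → Ω → ℝ) (hqmeas : ∀ i ∈ H0, Measurable (q i))
    (hqrange : ∀ i ∈ H0, ∀ ω, q i ω ∈ Set.Ioc (0 : ℝ) 1)
    (hsubunif : ∀ i ∈ H0, ∀ x ∈ Set.Icc (0 : ℝ) 1,
      ℙ {ω | q i ω ≤ x} ≤ ENNReal.ofReal x)
    (hindep : iIndepFun
      (fun i : {i // i ∈ H0} => q i.1) ℙ)
    (hdom : ∀ i ∈ H0, ∀ᵐ ω ∂(ℙ : Measure Ω), q i ω ≤ p i ω) :
    ∫ ω, ((BHset n α p ω ∩ H0).card : ℝ) / max ((BHset n α p ω).card : ℝ) 1 ∂ℙ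
      ≤ 4 * α * Real.log (9 / α) :=
  BH_FDR_control_general hn hα0 hα1 H0 p q hqmeas hsubunif hindep hdom
end

section
/- Let a > 0 and let Z be a real-valued random variable satisfying P(Z ≥ t) ≤ exp(−t/a) for all t ≥ 0. Then for every λ with 0 ≤ λ < 1/a: log E[ exp(λ·(Z − a)) ] ≤ −a·λ − log(1 − λ·a) ≤ (a²·λ²)/(2·(1 − λ·a)). In particular, the elementary inequality −x − log(1−x) ≤ x²/(2(1−x)) holds for all x ∈ [0,1). -/
/-!
If `P(Z ≥ t) ≤ exp(-t/a)`, then for `λ > 0` and `t > 1` the variable `exp(λZ)` satisfies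
`P(exp(λZ) ≥ t) ≤ t^(-p)` with `p = 1/(λa) > 1`. The layer-cake formula bounds `E[exp(λZ)]`
by `1 + ∫_1^∞ t^(-p) dt = 1/(1 - λa)`; the shift by `a` contributes the factor `exp(-λa)`.
The elementary inequality compares `-x - log(1 - x) = ∑_{n ≥ 2} xⁿ/n` termwise with
`∑_{n ≥ 2} xⁿ/2 = x²/(2(1 - x))`.
-/

open MeasureTheory ProbabilityTheory Real Set

lemma neg_sub_log_one_sub_le {x : ℝ} (hx0 : 0 ≤ x) (hx1 : x < 1) :
    -x - log (1 - x) ≤ x ^ 2 / (2 * (1 - x)) := by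
  have hlog : HasSum (fun n : ℕ => x ^ (n + 2) / (n + 2)) (-log (1 - x) - x) := by
    have h := (hasSum_nat_add_iff' 1).2
      (hasSum_pow_div_log_of_abs_lt_one (abs_lt.2 ⟨by linarith, hx1⟩))
    simpa [add_assoc, one_add_one_eq_two] using h
  have hgeom : HasSum (fun n : ℕ => x ^ 2 / 2 * x ^ n) (x ^ 2 / 2 * (1 - x)⁻¹) :=
    (hasSum_geometric_of_lt_one hx0 hx1).mul_left _
  have hterm (n : ℕ) : x ^ (n + 2) / (n + 2) ≤ x ^ 2 / 2 * x ^ n := by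
    rw [div_mul_eq_mul_div, ← pow_add, add_comm 2 n]
    gcongr
    linarith [(n.cast_nonneg : (0 : ℝ) ≤ n)]
  have hle := hasSum_le hterm hlog hgeom
  rw [← div_eq_mul_inv, div_div] at hle
  linarith

lemma lintegral_Ioi_one_rpow_neg {p : ℝ} (hp : 1 < p) :
    ∫⁻ t in Ioi (1 : ℝ), ENNReal.ofReal (t ^ (-p)) = ENNReal.ofReal (1 / (p - 1)) := by
  have hp' : -p < -1 := neg_lt_neg hp
  rw [← ofReal_integral_eq_lintegral_ofReal (integrableOn_Ioi_rpow_of_lt hp' one_pos)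
    ((ae_restrict_iff' measurableSet_Ioi).2 (.of_forall fun t ht =>
      rpow_nonneg (one_pos.trans ht).le _)),
    integral_Ioi_rpow_of_lt hp' one_pos, one_rpow, neg_div, ← div_neg, neg_add', neg_neg]

section

variable {α : Type*} [MeasurableSpace α] {μ : Measure α}

lemma lintegral_ofReal_le_of_meas_le_rpow_neg [IsProbabilityMeasure μ] {f : α → ℝ}
    (hf0 : 0 ≤ᵐ[μ] f) (hf : AEMeasurable f μ) {p : ℝ} (hp : 1 < p)
    (htail : ∀ t, 1 < t → μ {ω | t ≤ f ω} ≤ ENNReal.ofReal (t ^ (-p))) :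
    ∫⁻ ω, ENNReal.ofReal (f ω) ∂μ ≤ ENNReal.ofReal (p / (p - 1)) := by
  rw [lintegral_eq_lintegral_meas_le μ hf0 hf, ← Ioc_union_Ioi_eq_Ioi zero_le_one,
    lintegral_union measurableSet_Ioi (Ioc_disjoint_Ioi le_rfl)]
  have hsmall : ∫⁻ t in Ioc (0 : ℝ) 1, μ {ω | t ≤ f ω} ≤ 1 :=
    calc ∫⁻ t in Ioc (0 : ℝ) 1, μ {ω | t ≤ f ω} ≤ ∫⁻ _ in Ioc (0 : ℝ) 1, 1 :=
          lintegral_mono fun _ => prob_le_one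
      _ = 1 := by simp
  have hlarge : ∫⁻ t in Ioi (1 : ℝ), μ {ω | t ≤ f ω} ≤ ENNReal.ofReal (1 / (p - 1)) :=
    (setLIntegral_mono' measurableSet_Ioi htail).trans (lintegral_Ioi_one_rpow_neg hp).le
  calc _ ≤ 1 + ENNReal.ofReal (1 / (p - 1)) := add_le_add hsmall hlarge
    _ = ENNReal.ofReal (p / (p - 1)) := by
      have : p - 1 ≠ 0 := by linarith
      rw [← ENNReal.ofReal_one, ← ENNReal.ofReal_add zero_le_one (by bound)]
      congr 1
      field_simp
      ring

lemma meas_le_exp_mul_le_rpow_neg {Z : α → ℝ} {a l : ℝ} (ha : 0 < a) (hl : 0 < l)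
    (htail : ∀ t : ℝ, 0 ≤ t → μ {ω | Z ω ≥ t} ≤ ENNReal.ofReal (exp (-t / a)))
    {t : ℝ} (ht : 1 ≤ t) :
    μ {ω | t ≤ exp (l * Z ω)} ≤ ENNReal.ofReal (t ^ (-(l * a)⁻¹)) := by
  have ht0 : 0 < t := one_pos.trans_le ht
  have hsub : {ω | t ≤ exp (l * Z ω)} ⊆ {ω | Z ω ≥ log t / l} :=
    fun ω (hω : t ≤ exp (l * Z ω)) => show log t / l ≤ Z ω by
      rw [div_le_iff₀ hl, mul_comm, log_le_iff_le_exp ht0]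
      exact hω
  have hexp : exp (-(log t / l) / a) = t ^ (-(l * a)⁻¹) := by
    rw [rpow_def_of_pos ht0]
    congr 1
    field_simp
  calc _ ≤ μ {ω | Z ω ≥ log t / l} := measure_mono hsub
    _ ≤ _ := htail _ (div_nonneg (log_nonneg ht) hl.le)
    _ = _ := by rw [hexp]

section ExpTail

variable [IsProbabilityMeasure μ] {Z : α → ℝ} {a l : ℝ}

lemma lintegral_exp_mul_le_of_exp_tail (hZ : AEMeasurable Z μ) (ha : 0 < a) (hl : 0 ≤ l)
    (hla : l * a < 1)
    (htail : ∀ t : ℝ, 0 ≤ t → μ {ω | Z ω ≥ t} ≤ ENNReal.ofReal (exp (-t / a))) :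
    ∫⁻ ω, ENNReal.ofReal (exp (l * Z ω)) ∂μ ≤ ENNReal.ofReal (1 - l * a)⁻¹ := by
  rcases hl.eq_or_lt with rfl | hl
  · simp
  have hp : 1 < (l * a)⁻¹ := one_lt_inv_iff₀.2 ⟨by positivity, hla⟩
  convert lintegral_ofReal_le_of_meas_le_rpow_neg (f := fun ω => exp (l * Z ω))
    (.of_forall fun ω => (exp_pos _).le) (measurable_exp.comp_aemeasurable (hZ.const_mul l)) hp
    fun t ht => meas_le_exp_mul_le_rpow_neg ha hl htail ht.le using 2
  have : l * a ≠ 0 := by positivity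
  have : 1 - l * a ≠ 0 := by linarith
  field_simp

lemma integrable_exp_mul_of_exp_tail (hZ : AEMeasurable Z μ) (ha : 0 < a) (hl : 0 ≤ l)
    (hla : l * a < 1)
    (htail : ∀ t : ℝ, 0 ≤ t → μ {ω | Z ω ≥ t} ≤ ENNReal.ofReal (exp (-t / a))) :
    Integrable (fun ω => exp (l * Z ω)) μ := by
  refine ⟨(measurable_exp.comp_aemeasurable (hZ.const_mul l)).aestronglyMeasurable, ?_⟩
  rw [hasFiniteIntegral_iff_ofReal (.of_forall fun ω => (exp_pos _).le)]
  exact (lintegral_exp_mul_le_of_exp_tail hZ ha hl hla htail).trans_lt ENNReal.ofReal_lt_top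

lemma mgf_le_of_exp_tail (hZ : AEMeasurable Z μ) (ha : 0 < a) (hl : 0 ≤ l)
    (hla : l * a < 1)
    (htail : ∀ t : ℝ, 0 ≤ t → μ {ω | Z ω ≥ t} ≤ ENNReal.ofReal (exp (-t / a))) :
    mgf Z μ l ≤ (1 - l * a)⁻¹ := by
  rw [mgf, integral_eq_lintegral_of_nonneg_ae (.of_forall fun ω => (exp_pos _).le)
    (measurable_exp.comp_aemeasurable (hZ.const_mul l)).aestronglyMeasurable]
  exact ENNReal.toReal_le_of_le_ofReal (by bound)
    (lintegral_exp_mul_le_of_exp_tail hZ ha hl hla htail)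

end ExpTail

end

/-- Moment generating function bound for a random variable with an exponential tail:
for `0 ≤ λ < 1/a`, `log E[exp(λ(Z - a))] ≤ -aλ - log(1 - λa) ≤ a²λ²/(2(1 - λa))`;
in particular the elementary inequality `-x - log(1 - x) ≤ x²/(2(1 - x))` holds on `[0, 1)`. -/
theorem exponential_tail_mgf_bound {Ω : Type*} [MeasureSpace Ω]
    [IsProbabilityMeasure (ℙ : Measure Ω)]
    {a : ℝ} (ha : 0 < a) (Z : Ω → ℝ) (hmeas : Measurable Z)
    (htail : ∀ t : ℝ, 0 ≤ t → (ℙ : Measure Ω) {ω | Z ω ≥ t} ≤ ENNReal.ofReal (Real.exp (-t / a))) :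
    (∀ l : ℝ, 0 ≤ l → l < 1 / a →
      Real.log (∫ ω : Ω, Real.exp (l * (Z ω - a))) ≤ -a * l - Real.log (1 - l * a) ∧
      -a * l - Real.log (1 - l * a) ≤ a ^ 2 * l ^ 2 / (2 * (1 - l * a))) ∧
    (∀ x : ℝ, 0 ≤ x → x < 1 → -x - Real.log (1 - x) ≤ x ^ 2 / (2 * (1 - x))) := by
  refine ⟨fun l hl hl_lt => ?_, fun x => neg_sub_log_one_sub_le⟩
  have hla : l * a < 1 := (lt_div_iff₀ ha).1 hl_lt
  refine ⟨?_, by convert neg_sub_log_one_sub_le (by positivity) hla using 2 <;> ring⟩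
  have hint := integrable_exp_mul_of_exp_tail hmeas.aemeasurable ha hl hla htail
  have hshift : ∫ ω, exp (l * (Z ω - a)) = mgf Z ℙ l * exp (l * -a) := by
    simp_rw [sub_eq_add_neg]
    exact mgf_add_const _
  calc log (∫ ω, exp (l * (Z ω - a))) = log (mgf Z ℙ l) - a * l := by
        rw [hshift, log_mul (mgf_pos hint).ne' (exp_ne_zero _), log_exp]
        ring
    _ ≤ log (1 - l * a)⁻¹ - a * l := by
        gcongr
        exacts [mgf_pos hint, mgf_le_of_exp_tail hmeas.aemeasurable ha hl hla htail]
    _ = -a * l - log (1 - l * a) := by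
        rw [log_inv]
        ring
end
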